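/- arXiv:2604.23987 — 2 statements merged into one kernel-verified Lean document; each statement's English description precedes it below -/
import Mathlib

section
/- Let α ∈ (0,1), let X₁, …, X_m be i.i.d. real random variables whose common CDF F is continuous (so the values are almost surely pairwise distinct), let k := ⌈m(1 − α)⌉ ≤ m, and let q̂ be the k-th order statistic of X₁, …, X_m. Then for every δ ∈ (0,1), with probability at least 1 − δ, |F(q̂) − (1 − α)| ≤ √( log(2/δ) / (2m) ) + 1/m. -/
/-!
Rather than the uniform DKW bound, Hoeffding's inequality at two points suffices. Set
`ε = √(log(2/δ)/(2m))` and `u± = (1 - α) ± (ε + 1/m)`; by continuity `F` attains these levels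
at points `c±`. Since `q̂ ≤ c` iff at least `k` of the samples are `≤ c`, and
`m(1 - α) ≤ k ≤ m(1 - α) + 1`, the event `F q̂ > u₊` forces the number of samples `≤ c₊` at
least `mε` below its mean `m u₊`, and `F q̂ < u₋` forces the number of samples `≤ c₋` at least
`mε` above its mean `m u₋`. Hoeffding bounds each event by `exp(-2mε²) = δ/2`.
-/

open MeasureTheory ProbabilityTheory

/-- The `k`-th order statistic (1-indexed) of the values `x 0, …, x (m-1)`:
the `k`-th smallest value when sorted in nondecreasing order. -/
noncomputable def orderStat {m : ℕ} (x : Fin m → ℝ) (k : ℕ) : ℝ :=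
  (Multiset.sort (Multiset.map x Finset.univ.val) (· ≤ ·)).getD (k - 1) 0

open Finset Real

theorem List.Pairwise.getElem_le_iff_lt_countP {α : Type*} [LinearOrder α] {l : List α}
    (hl : l.Pairwise (· ≤ ·)) {j : ℕ} (hj : j < l.length) (s : α) :
    l[j] ≤ s ↔ j < l.countP (· ≤ s) := by
  have hsplit := hl
  rw [← List.take_append_drop j l, List.drop_eq_getElem_cons hj, List.pairwise_append,
    List.pairwise_cons] at hsplit
  obtain ⟨-, ⟨hrest, -⟩, htake⟩ := hsplit
  have hcount : l.countP (· ≤ s) =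
      (l.take j).countP (· ≤ s) + (l[j] :: l.drop (j + 1)).countP (· ≤ s) := by
    rw [← List.countP_append, ← List.drop_eq_getElem_cons hj, List.take_append_drop]
  have htake_len : (l.take j).length = j := List.length_take_of_le hj.le
  constructor
  · intro h
    have hall : (l.take j).countP (· ≤ s) = j := by
      rw [List.countP_eq_length.2 fun a ha ↦ ?_, htake_len]
      simpa using (htake a ha l[j] List.mem_cons_self).trans h
    have hpos : 0 < (l[j] :: l.drop (j + 1)).countP (· ≤ s) :=
      List.countP_pos_iff.2 ⟨l[j], List.mem_cons_self, by simpa using h⟩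
    omega
  · intro h
    by_contra! hs
    have hnone : (l[j] :: l.drop (j + 1)).countP (· ≤ s) = 0 := by
      rw [List.countP_eq_zero]
      rintro b (_ | ⟨_, hb⟩)
      · simpa using hs
      · simpa using hs.trans_le (hrest b hb)
    have := (l.take j).countP_le_length (p := (· ≤ s))
    omega

theorem orderStat_le_iff {m : ℕ} (x : Fin m → ℝ) {k : ℕ} (hk₁ : 1 ≤ k) (hkm : k ≤ m) (s : ℝ) :
    orderStat x k ≤ s ↔ k ≤ #{i | x i ≤ s} := by
  set l := Multiset.sort (Multiset.map x univ.val) (· ≤ ·)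
  have hj : k - 1 < l.length := by simp [l]; omega
  have hcount : l.countP (· ≤ s) = #{i | x i ≤ s} := by
    rw [← Multiset.coe_countP, Multiset.sort_eq, Multiset.countP_map]
    rfl
  rw [orderStat, List.getD_eq_getElem _ _ hj,
    (Multiset.pairwise_sort _ _).getElem_le_iff_lt_countP hj, hcount]
  omega

theorem exists_isProbabilityMeasure_eq_cdf {Ω : Type*} [MeasurableSpace Ω] {μ : Measure Ω}
    [IsProbabilityMeasure μ] {Y : Ω → ℝ} (hY : Measurable Y) {F : ℝ → ℝ}
    (hF : ∀ t, F t = (μ {ω | Y ω ≤ t}).toReal) :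
    ∃ ν : Measure ℝ, IsProbabilityMeasure ν ∧ F = cdf ν := by
  have := Measure.isProbabilityMeasure_map (μ := μ) hY.aemeasurable
  refine ⟨μ.map Y, this, funext fun t ↦ ?_⟩
  rw [hF, cdf_eq_real, map_measureReal_apply hY measurableSet_Iic, measureReal_def]
  rfl

theorem exists_cdf_eq_of_continuous (ν : Measure ℝ) [IsProbabilityMeasure ν]
    (hcont : Continuous (cdf ν)) {u : ℝ} (hu : u ∈ Set.Ioo 0 1) : ∃ c, cdf ν c = u :=
  mem_range_of_exists_le_of_exists_ge hcont
    (((tendsto_cdf_atBot ν).eventually_le_const hu.1).exists)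
    (((tendsto_cdf_atTop ν).eventually_const_le hu.2).exists)

section EmpiricalCount

variable {Ω ι : Type*} [MeasurableSpace Ω] {μ : Measure Ω} [IsProbabilityMeasure μ] [Fintype ι]
  {X : ι → Ω → ℝ} {c θ : ℝ}

theorem hasSubgaussianMGF_card_le_sub (hmeas : ∀ i, Measurable (X i)) (hindep : iIndepFun X μ)
    (hθ : ∀ i, μ.real {ω | X i ω ≤ c} = θ) :
    HasSubgaussianMGF (fun ω ↦ (#{i | X i ω ≤ c} : ℝ) - Fintype.card ι * θ)
      (Fintype.card ι / 4) μ := by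
  set g : ℝ → ℝ := (Set.Iic c).indicator 1
  have hg : Measurable g := measurable_const.indicator measurableSet_Iic
  have hsummand : ∀ i, HasSubgaussianMGF (fun ω ↦ g (X i ω) - θ) (1 / 4) μ := by
    intro i
    have hmean : μ[g ∘ X i] = θ := by
      have hind : g ∘ X i = {ω | X i ω ≤ c}.indicator 1 := by
        ext ω; simp [g, Set.indicator_apply]
      rw [hind, integral_indicator_one (measurableSet_le (hmeas i) measurable_const), hθ i]
    have h := hasSubgaussianMGF_of_mem_Icc (μ := μ) (a := 0) (b := 1)
      (hg.comp (hmeas i)).aemeasurable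
      (ae_of_all _ fun ω ↦ ⟨Set.indicator_nonneg (fun _ _ ↦ zero_le_one) _,
        Set.indicator_le_self' (fun _ _ ↦ zero_le_one) _⟩)
    have hvar : (‖(1 : ℝ) - 0‖₊ / 2) ^ 2 = 1 / 4 := by
      rw [sub_zero, nnnorm_one]
      norm_num
    rwa [hmean, hvar] at h
  have hsum := HasSubgaussianMGF.sum_of_iIndepFun
    (hindep.comp (fun _ x ↦ g x - θ) fun _ ↦ hg.sub_const θ) (s := univ) fun i _ ↦ hsummand i
  convert hsum using 1
  · ext ω
    simp [g, sum_sub_distrib, Set.indicator_apply]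
  · rw [sum_const, card_univ, nsmul_eq_mul]
    ring

theorem measureReal_card_le_sub_ge_le (hmeas : ∀ i, Measurable (X i)) (hindep : iIndepFun X μ)
    (hθ : ∀ i, μ.real {ω | X i ω ≤ c} = θ) {t : ℝ} (ht : 0 ≤ t) :
    μ.real {ω | t ≤ #{i | X i ω ≤ c} - Fintype.card ι * θ} ≤
      exp (-2 * t ^ 2 / Fintype.card ι) := by
  convert (hasSubgaussianMGF_card_le_sub hmeas hindep hθ).measure_ge_le ht using 2
  push_cast
  ring

theorem measureReal_sub_card_le_ge_le (hmeas : ∀ i, Measurable (X i)) (hindep : iIndepFun X μ)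
    (hθ : ∀ i, μ.real {ω | X i ω ≤ c} = θ) {t : ℝ} (ht : 0 ≤ t) :
    μ.real {ω | t ≤ Fintype.card ι * θ - #{i | X i ω ≤ c}} ≤
      exp (-2 * t ^ 2 / Fintype.card ι) := by
  convert (hasSubgaussianMGF_card_le_sub hmeas hindep hθ).neg.measure_ge_le ht using 2
  · simp
  · push_cast
    ring

end EmpiricalCount

theorem exp_neg_two_mul_sq_div_le_half {m δ t : ℝ} (hm : 0 < m) (hδ₀ : 0 < δ) (hδ₂ : δ ≤ 2)
    (ht : m * √(log (2 / δ) / (2 * m)) ≤ t) : exp (-2 * t ^ 2 / m) ≤ δ / 2 := by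
  have hlog : 0 ≤ log (2 / δ) := log_nonneg (by rw [le_div_iff₀ hδ₀]; linarith)
  have hsq : (m * √(log (2 / δ) / (2 * m))) ^ 2 = m * log (2 / δ) / 2 := by
    rw [mul_pow, sq_sqrt (by positivity)]
    field_simp
  have hexponent : -2 * t ^ 2 / m ≤ -log (2 / δ) := by
    rw [div_le_iff₀ hm]
    nlinarith [pow_le_pow_left₀ (by positivity) ht 2]
  calc exp (-2 * t ^ 2 / m) ≤ exp (-log (2 / δ)) := exp_le_exp.2 hexponent
    _ = δ / 2 := by rw [exp_neg, exp_log (by positivity), inv_div]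

theorem ofReal_one_sub_le_measure_abs_sub_le {Ω : Type*} [MeasurableSpace Ω] {μ : Measure Ω}
    [IsProbabilityMeasure μ] {f : Ω → ℝ} {x r a b : ℝ}
    (hupper : μ.real {ω | x + r < f ω} ≤ a) (hlower : μ.real {ω | f ω < x - r} ≤ b) :
    ENNReal.ofReal (1 - (a + b)) ≤ μ {ω | |f ω - x| ≤ r} := by
  set G := {ω | |f ω - x| ≤ r}
  have hcompl : Gᶜ ⊆ {ω | x + r < f ω} ∪ {ω | f ω < x - r} := by
    intro ω hω
    simp only [G, Set.mem_compl_iff, Set.mem_union, Set.mem_ofPred_eq, abs_le, not_and_or,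
      not_le] at hω ⊢
    rcases hω with h | h
    · right; linarith
    · left; linarith
  have hcover : 1 ≤ μ.real G + μ.real Gᶜ := by
    simpa [Set.union_compl_self] using measureReal_union_le (μ := μ) G Gᶜ
  refine ENNReal.ofReal_le_of_le_toReal ?_
  have := (measureReal_mono (μ := μ) hcompl).trans (measureReal_union_le _ _)
  rw [← measureReal_def]
  linarith

section Coverage

variable {Ω : Type*} [MeasurableSpace Ω] {μ : Measure Ω} [IsProbabilityMeasure μ] {m k : ℕ}
  {X : Fin m → Ω → ℝ} {F : ℝ → ℝ}

theorem measureReal_lt_cdf_orderStat_le (hmeas : ∀ i, Measurable (X i))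
    (hindep : iIndepFun X μ) (hF : ∀ i t, F t = (μ {ω | X i ω ≤ t}).toReal)
    (hFcont : Continuous F) (hk₁ : 1 ≤ k)
    (hkm : k ≤ m) {u : ℝ} (hu₀ : 0 < u) (hku : k ≤ m * u + 1) :
    μ.real {ω | u < F (orderStat (fun i ↦ X i ω) k)} ≤ exp (-2 * (m * u + 1 - k) ^ 2 / m) := by
  obtain ⟨ν, _, rfl⟩ := exists_isProbabilityMeasure_eq_cdf (hmeas ⟨0, by omega⟩) (hF _)
  rcases lt_or_ge u 1 with hu₁ | hu₁
  swap
  · have hempty : {ω | u < cdf ν (orderStat (fun i ↦ X i ω) k)} = ∅ :=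
      Set.eq_empty_of_forall_notMem fun ω hω ↦ (hu₁.trans_lt hω).not_ge (cdf_le_one _ _)
    rw [hempty, measureReal_empty]
    positivity
  obtain ⟨c, hc⟩ := exists_cdf_eq_of_continuous ν hFcont ⟨hu₀, hu₁⟩
  have hθ : ∀ i, μ.real {ω | X i ω ≤ c} = u := fun i ↦ (hF i c).symm.trans hc
  calc _ ≤ μ.real {ω | m * u + 1 - k ≤ m * u - #{i | X i ω ≤ c}} := by
        refine measureReal_mono fun ω hω ↦ ?_
        have hlt : c < orderStat (fun i ↦ X i ω) k :=
          lt_of_not_ge fun h ↦ (hω.trans_le (hc ▸ (cdf ν).mono h)).false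
        have hcount : #{i | X i ω ≤ c} + 1 ≤ k := by
          rw [Nat.add_one_le_iff, ← not_le, ← orderStat_le_iff _ hk₁ hkm]
          exact hlt.not_ge
        have : ((#{i | X i ω ≤ c} : ℕ) : ℝ) + 1 ≤ k := by exact_mod_cast hcount
        simp only [Set.mem_ofPred_eq]
        linarith
    _ ≤ _ := by
        simpa only [Fintype.card_fin] using
          measureReal_sub_card_le_ge_le hmeas hindep hθ (t := m * u + 1 - k) (by linarith)

theorem measureReal_cdf_orderStat_lt_le (hmeas : ∀ i, Measurable (X i))
    (hindep : iIndepFun X μ) (hF : ∀ i t, F t = (μ {ω | X i ω ≤ t}).toReal)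
    (hFcont : Continuous F) (hk₁ : 1 ≤ k)
    (hkm : k ≤ m) {u : ℝ} (hu₁ : u < 1) (hku : m * u ≤ k) :
    μ.real {ω | F (orderStat (fun i ↦ X i ω) k) < u} ≤ exp (-2 * (k - m * u) ^ 2 / m) := by
  obtain ⟨ν, _, rfl⟩ := exists_isProbabilityMeasure_eq_cdf (hmeas ⟨0, by omega⟩) (hF _)
  rcases le_or_gt u 0 with hu₀ | hu₀
  · have hempty : {ω | cdf ν (orderStat (fun i ↦ X i ω) k) < u} = ∅ :=
      Set.eq_empty_of_forall_notMem fun ω hω ↦ (hω.trans_le hu₀).not_ge (cdf_nonneg _ _)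
    rw [hempty, measureReal_empty]
    positivity
  obtain ⟨c, hc⟩ := exists_cdf_eq_of_continuous ν hFcont ⟨hu₀, hu₁⟩
  have hθ : ∀ i, μ.real {ω | X i ω ≤ c} = u := fun i ↦ (hF i c).symm.trans hc
  calc _ ≤ μ.real {ω | k - m * u ≤ #{i | X i ω ≤ c} - m * u} := by
        refine measureReal_mono fun ω hω ↦ ?_
        have hle : orderStat (fun i ↦ X i ω) k ≤ c :=
          le_of_not_gt fun h ↦ (hω.trans_le (hc ▸ (cdf ν).mono h.le)).false
        have : (k : ℝ) ≤ #{i | X i ω ≤ c} := by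
          exact_mod_cast (orderStat_le_iff _ hk₁ hkm c).1 hle
        simp only [Set.mem_ofPred_eq]
        linarith
    _ ≤ _ := by
        simpa only [Fintype.card_fin] using
          measureReal_card_le_sub_ge_le hmeas hindep hθ (t := k - m * u) (by linarith)

end Coverage

/-- **Buffer-size theorem: coverage tracking (Theorem 2).**
Let `X 0, …, X (m-1)` be i.i.d. real random variables with continuous common CDF `F`, let
`k = ⌈m(1-α)⌉ ≤ m`, and let `q̂` be the `k`-th order statistic. Then with probability at
least `1 - δ`, `|F(q̂) - (1-α)| ≤ √(log(2/δ)/(2m)) + 1/m`. -/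
theorem buffer_size_coverage_tracking
    {Ω : Type*} [MeasurableSpace Ω] (μ : Measure Ω) [IsProbabilityMeasure μ]
    (α : ℝ) (hα : α ∈ Set.Ioo (0 : ℝ) 1)
    (m : ℕ) (hm : 1 ≤ m) (X : Fin m → Ω → ℝ) (hmeas : ∀ i, Measurable (X i))
    (hindep : iIndepFun X μ)
    (F : ℝ → ℝ) (hF : ∀ i t, F t = (μ {ω | X i ω ≤ t}).toReal) (hFcont : Continuous F)
    (k : ℕ) (hkdef : k = ⌈(m : ℝ) * (1 - α)⌉₊) (hk : k ≤ m) :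
    ∀ δ ∈ Set.Ioo (0 : ℝ) 1,
      ENNReal.ofReal (1 - δ) ≤
        μ {ω | |F (orderStat (fun i => X i ω) k) - (1 - α)| ≤
            Real.sqrt (Real.log (2 / δ) / (2 * (m : ℝ))) + 1 / (m : ℝ)} := by
  rintro δ ⟨hδ₀, hδ₁⟩
  obtain ⟨hα₀, hα₁⟩ := hα
  have hm₀ : (0 : ℝ) < m := by exact_mod_cast hm
  set ε := √(log (2 / δ) / (2 * m))
  have hmε : 0 ≤ m * ε := mul_nonneg hm₀.le (sqrt_nonneg _)
  have hη : 0 < ε + 1 / m := by positivity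
  have hmη : m * (ε + 1 / m) = m * ε + 1 := by field_simp
  have hmp : 0 < m * (1 - α) := mul_pos hm₀ (by linarith)
  have hk_ge : m * (1 - α) ≤ k := hkdef ▸ Nat.le_ceil _
  have hk_lt : k < m * (1 - α) + 1 := hkdef ▸ Nat.ceil_lt_add_one hmp.le
  have hk₁ : 1 ≤ k := by exact_mod_cast hmp.trans_le hk_ge
  have hupper : μ.real {ω | 1 - α + (ε + 1 / m) < F (orderStat (fun i ↦ X i ω) k)} ≤ δ / 2 :=
    (measureReal_lt_cdf_orderStat_le hmeas hindep hF hFcont hk₁ hk (by linarith)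
      (by rw [mul_add, hmη]; linarith)).trans
    (exp_neg_two_mul_sq_div_le_half hm₀ hδ₀ (by linarith) (by rw [mul_add, hmη]; linarith))
  have hlower : μ.real {ω | F (orderStat (fun i ↦ X i ω) k) < 1 - α - (ε + 1 / m)} ≤ δ / 2 :=
    (measureReal_cdf_orderStat_lt_le hmeas hindep hF hFcont hk₁ hk (by linarith)
      (by rw [mul_sub, hmη]; linarith)).trans
    (exp_neg_two_mul_sq_div_le_half hm₀ hδ₀ (by linarith) (by rw [mul_sub, hmη]; linarith))
  simpa only [add_halves] using ofReal_one_sub_le_measure_abs_sub_le hupper hlower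
end

section
/- Let μ₁, …, μ_k be probability measures on ℝ, let μ̄ = (1/k)·Σ_{j=1}^k μ_j, let α ∈ (0,1) and m ≥ 1 with r := ⌈(m + 1)(1 − α)⌉ ≤ m. Let S₁, …, S_m be i.i.d. random variables with law μ̄, let q̂ be the r-th order statistic of S₁, …, S_m, and let T be a random variable with law μ_j, independent of (S₁, …, S_m), for some j ∈ {1, …, k}. Then P(T ≤ q̂) ≥ (1 − α) − TV(μ_j, μ̄). -/
/-!
The threshold satisfies `t ≤ q̂` iff fewer than `r` calibration scores lie strictly below `t`.
If the test score were drawn from `μ̄` itself, the `m + 1` scores would be i.i.d., hence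
exchangeable, so each of them has fewer than `r` scores strictly below it with the same
probability. Since at least `r` of any `m + 1` reals have this property, that probability is at
least `r / (m + 1) ≥ 1 - α`. Conditionally on the calibration scores the coverage event is a
fixed measurable set of test scores, and replacing `μ̄` by `μ j` changes its probability by at
most `TV(μ j, μ̄)`.
-/

open MeasureTheory ProbabilityTheory

/-- Total variation distance between two measures:
`TV(P, Q) = sup over measurable sets A of |P(A) - Q(A)|`. -/
noncomputable def tvDist {Ω : Type*} [MeasurableSpace Ω] (P Q : Measure Ω) : ℝ :=
  ⨆ A : {A : Set Ω // MeasurableSet A}, |(P A.1).toReal - (Q A.1).toReal|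

open Finset

section CountLT

variable {ι α : Type*} [Fintype ι] [LinearOrder α]

def countLT (x : ι → α) (t : α) : ℕ := #{i | x i < t}

lemma countLT_eq_countP (x : ι → α) (t : α) :
    countLT x t = (univ.val.map x).countP (· < t) := by
  rw [Multiset.countP_map, countLT, card_def, filter_val]

lemma countLT_comp_equiv {κ : Type*} [Fintype κ] (x : ι → α) (σ : κ ≃ ι) (t : α) :
    countLT (x ∘ σ) t = countLT x t :=
  card_equiv σ (by simp)

lemma countLT_eq_countLT_init_add {n : ℕ} (x : Fin (n + 1) → α) (t : α) :
    countLT x t = countLT (Fin.init x) t + if x (Fin.last n) < t then 1 else 0 := by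
  rw [countLT, countLT, card_filter, card_filter, Fin.sum_univ_castSucc]
  rfl

lemma Monotone.le_apply_iff_countLT_le {n : ℕ} {f : Fin n → α} (hf : Monotone f) (k : Fin n)
    (t : α) : t ≤ f k ↔ countLT f t ≤ k := by
  constructor
  · intro htk
    calc countLT f t ≤ #(Iio k) := card_le_card fun i hi =>
          mem_Iio.2 (lt_of_not_ge fun hki => (mem_filter.1 hi).2.not_ge (htk.trans (hf hki)))
      _ = k := Fin.card_Iio k
  · intro hcount
    by_contra! hkt
    have : #(Iic k) ≤ countLT f t := card_le_card fun i hi =>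
      mem_filter.2 ⟨mem_univ i, (hf (mem_Iic.1 hi)).trans_lt hkt⟩
    rw [Fin.card_Iic] at this
    omega

lemma le_card_filter_countLT_apply_le (x : ι → α) {r : ℕ} (hr : r ≤ Fintype.card ι) :
    r ≤ #{l | countLT x (x l) ≤ r - 1} := by
  set low : Finset ι := {l | countLT x (x l) ≤ r - 1}
  set high : Finset ι := {l | r - 1 < countLT x (x l)}
  rcases high.eq_empty_or_nonempty with hempty | hne
  · rw [filter_eq_empty_iff] at hempty
    rwa [show low = univ from filter_true_of_mem fun l _ => not_lt.1 (hempty (mem_univ l)),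
      card_univ]
  -- A `high` index of least value has at least `r` values below it, all low by minimality.
  obtain ⟨l₀, hl₀, hmin⟩ := high.exists_min_image x hne
  have hsub : ({i | x i < x l₀} : Finset ι) ⊆ low := fun i hi =>
    mem_filter.2 ⟨mem_univ i, not_lt.1 fun hih =>
      (hmin i (mem_filter.2 ⟨mem_univ i, hih⟩)).not_gt (mem_filter.1 hi).2⟩
  have hl₀' : r - 1 < countLT x (x l₀) := (mem_filter.1 hl₀).2
  have := card_le_card hsub
  unfold countLT at hl₀'
  omega

end CountLT

lemma le_orderStat_iff {m : ℕ} (x : Fin m → ℝ) {r : ℕ} (hr : r - 1 < m) (t : ℝ) :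
    t ≤ orderStat x r ↔ countLT x t ≤ r - 1 := by
  set l := (univ.val.map x).sort (· ≤ ·)
  have hlen : r - 1 < l.length := by simpa [l] using hr
  have hcount : countLT x t = countLT l.get t := by
    rw [countLT_eq_countP, countLT_eq_countP, Fin.univ_val_map l.get, List.ofFn_get,
      Multiset.sort_eq]
  rw [orderStat, List.getD_eq_getElem _ _ hlen, hcount]
  exact Monotone.le_apply_iff_countLT_le (fun _ _ => (Multiset.pairwise_sort _ _).rel_get_of_le)
    ⟨r - 1, hlen⟩ t

section Exchangeability

variable {ι : Type*} [Fintype ι]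

lemma measurable_countLT {β : Type*} [MeasurableSpace β] {f : ι → β → ℝ}
    (hf : ∀ i, Measurable (f i)) {g : β → ℝ} (hg : Measurable g) :
    Measurable fun b => countLT (fun i => f i b) (g b) := by
  simp only [countLT, card_filter]
  exact Finset.measurable_sum _ fun i _ =>
    Measurable.ite (measurableSet_lt (hf i) hg) measurable_const measurable_const

lemma measurableSet_countLT_le {β : Type*} [MeasurableSpace β] {f : ι → β → ℝ}
    (hf : ∀ i, Measurable (f i)) {g : β → ℝ} (hg : Measurable g) (c : ℕ) :
    MeasurableSet {b | countLT (fun i => f i b) (g b) ≤ c} :=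
  measurable_countLT hf hg measurableSet_Iic

lemma natCast_mul_measure_univ_le_sum_measure {Ω : Type*} [MeasurableSpace Ω] (μ : Measure Ω)
    {s : ι → Set Ω} [∀ x l, Decidable (x ∈ s l)] (hs : ∀ l, MeasurableSet (s l)) {r : ℕ}
    (h : ∀ x, r ≤ #{l | x ∈ s l}) :
    r * μ Set.univ ≤ ∑ l, μ (s l) :=
  calc (r : ENNReal) * μ Set.univ = ∫⁻ _, (r : ENNReal) ∂μ := (lintegral_const _).symm
    _ ≤ ∫⁻ x, ∑ l, (s l).indicator 1 x ∂μ := lintegral_mono fun x => by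
        simp only [Set.indicator_apply, Pi.one_apply, sum_boole]
        exact_mod_cast h x
    _ = ∑ l, μ (s l) := by
        rw [lintegral_finsetSum _ fun l _ => measurable_one.indicator (hs l)]
        simp only [lintegral_indicator_one (hs _)]

lemma measure_pi_countLT_apply_le_eq (ν : Measure ℝ) [SigmaFinite ν] (c : ℕ) (l l' : ι) :
    Measure.pi (fun _ : ι => ν) {x | countLT x (x l) ≤ c} =
      Measure.pi (fun _ : ι => ν) {x | countLT x (x l') ≤ c} := by
  classical
  set σ := Equiv.swap l l'
  have hσ := measurePreserving_piCongrLeft (fun _ : ι => ν) σ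
  have hpre : MeasurableEquiv.piCongrLeft (fun _ => ℝ) σ ⁻¹' {x | countLT x (x l) ≤ c} =
      {x | countLT x (x l') ≤ c} := by
    ext x
    have happly : MeasurableEquiv.piCongrLeft (fun _ => ℝ) σ x = x ∘ σ.symm := by
      ext i
      simp [MeasurableEquiv.coe_piCongrLeft, Equiv.piCongrLeft_apply_eq_cast]
    simp [happly, countLT_comp_equiv, σ]
  rw [← hpre, hσ.measure_preimage]
  exact (measurableSet_countLT_le measurable_pi_apply (measurable_pi_apply l) c).nullMeasurableSet

lemma natCast_le_card_mul_measure_pi_countLT_le (ν : Measure ℝ) [IsProbabilityMeasure ν]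
    {r : ℕ} (hr : r ≤ Fintype.card ι) (l : ι) :
    (r : ENNReal) ≤
      Fintype.card ι * Measure.pi (fun _ : ι => ν) {x | countLT x (x l) ≤ r - 1} := by
  have hsum := natCast_mul_measure_univ_le_sum_measure (Measure.pi fun _ : ι => ν)
    (s := fun l' => {x | countLT x (x l') ≤ r - 1})
    (fun l' => measurableSet_countLT_le measurable_pi_apply (measurable_pi_apply l') (r - 1))
    (fun x => le_card_filter_countLT_apply_le x hr)
  rwa [measure_univ, mul_one, sum_congr rfl fun l' _ => measure_pi_countLT_apply_le_eq ν _ l' l,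
    sum_const, card_univ, nsmul_eq_mul] at hsum

end Exchangeability

lemma measure_prod_countLT_le_eq_pi {m : ℕ} (ν : Measure ℝ) [SigmaFinite ν] (c : ℕ) :
    ((Measure.pi fun _ : Fin m => ν).prod ν) {p | countLT p.1 p.2 ≤ c} =
      Measure.pi (fun _ : Fin (m + 1) => ν) {x | countLT x (x (Fin.last m)) ≤ c} := by
  have hsplit : MeasurePreserving (fun x : Fin (m + 1) → ℝ => (Fin.init x, x (Fin.last m)))
      (Measure.pi fun _ => ν) ((Measure.pi fun _ : Fin m => ν).prod ν) := by
    convert Measure.measurePreserving_swap.comp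
      (measurePreserving_piFinSuccAbove (fun _ : Fin (m + 1) => ν) (Fin.last m)) using 1
    ext x <;> simp [Fin.init]
  have hE : MeasurableSet {p : (Fin m → ℝ) × ℝ | countLT p.1 p.2 ≤ c} :=
    measurableSet_countLT_le (fun i => (measurable_pi_apply i).comp measurable_fst) measurable_snd c
  rw [← hsplit.measure_preimage hE.nullMeasurableSet]
  congr 1 with x
  simp [countLT_eq_countLT_init_add x]

lemma div_le_measure_prod_countLT_le {m r : ℕ} (ν : Measure ℝ) [IsProbabilityMeasure ν]
    (hr : r ≤ m + 1) :
    (r : ENNReal) / (m + 1) ≤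
      ((Measure.pi fun _ : Fin m => ν).prod ν) {p | countLT p.1 p.2 ≤ r - 1} := by
  rw [measure_prod_countLT_le_eq_pi, ENNReal.div_le_iff_le_mul (by simp) (by simp), mul_comm]
  simpa using natCast_le_card_mul_measure_pi_countLT_le ν (by simpa using hr) (Fin.last m)

section TotalVariation

variable {Ω : Type*} [MeasurableSpace Ω]

lemma tvDist_nonneg (P Q : Measure Ω) : 0 ≤ tvDist P Q :=
  Real.iSup_nonneg fun _ => abs_nonneg _

lemma measure_le_add_tvDist (P Q : Measure Ω) [IsProbabilityMeasure P] [IsProbabilityMeasure Q]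
    {A : Set Ω} (hA : MeasurableSet A) : Q A ≤ P A + ENNReal.ofReal (tvDist P Q) := by
  have hbdd : BddAbove (Set.range fun B : {B : Set Ω // MeasurableSet B} =>
      |(P B.1).toReal - (Q B.1).toReal|) :=
    ⟨1, Set.forall_mem_range.2 fun B => abs_sub_le_of_nonneg_of_le measureReal_nonneg
      measureReal_le_one measureReal_nonneg measureReal_le_one⟩
  have hdiff : (Q A).toReal - (P A).toReal ≤ tvDist P Q :=
    ((le_abs_self _).trans_eq (abs_sub_comm _ _)).trans (le_ciSup hbdd ⟨A, hA⟩)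
  rw [← ENNReal.ofReal_toReal (measure_ne_top Q A),
    ← ENNReal.ofReal_toReal (measure_ne_top P A),
    ← ENNReal.ofReal_add ENNReal.toReal_nonneg (tvDist_nonneg P Q)]
  exact ENNReal.ofReal_le_ofReal (by linarith)

end TotalVariation

lemma MeasureTheory.Measure.prod_apply_le_prod_apply_add {α β : Type*} [MeasurableSpace α]
    [MeasurableSpace β] (ρ : Measure α) [IsProbabilityMeasure ρ]
    {ν ν' : Measure β} [SFinite ν] [SFinite ν']
    {E : Set (α × β)} (hE : MeasurableSet E) {ε : ENNReal}
    (h : ∀ a, ν (Prod.mk a ⁻¹' E) ≤ ν' (Prod.mk a ⁻¹' E) + ε) :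
    (ρ.prod ν) E ≤ (ρ.prod ν') E + ε := by
  rw [Measure.prod_apply hE, Measure.prod_apply hE]
  calc ∫⁻ a, ν (Prod.mk a ⁻¹' E) ∂ρ
      ≤ ∫⁻ a, ν' (Prod.mk a ⁻¹' E) + ε ∂ρ := lintegral_mono h
    _ = ∫⁻ a, ν' (Prod.mk a ⁻¹' E) ∂ρ + ε := by
      rw [lintegral_add_right _ measurable_const, lintegral_const, measure_univ, mul_one]

lemma isProbabilityMeasure_inv_card_smul_sum {Ω ι : Type*} [MeasurableSpace Ω] [Fintype ι]
    [Nonempty ι] (μ : ι → Measure Ω) [∀ i, IsProbabilityMeasure (μ i)] :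
    IsProbabilityMeasure ((Fintype.card ι : ENNReal)⁻¹ • ∑ i, μ i) :=
  ⟨by simp [ENNReal.inv_mul_cancel]⟩

theorem pooled_threshold_pertask_coverage_general
    {Ω : Type*} [MeasurableSpace Ω] (P : Measure Ω) [IsProbabilityMeasure P]
    (k : ℕ) (μ : Fin k → Measure ℝ) [∀ j, IsProbabilityMeasure (μ j)]
    (μbar : Measure ℝ) (hμbar : μbar = (k : ENNReal)⁻¹ • ∑ j : Fin k, μ j)
    (α : ℝ) (m : ℕ) (hm : 1 ≤ m)
    (r : ℕ) (hrdef : r = ⌈((m : ℝ) + 1) * (1 - α)⌉₊) (hr : r ≤ m)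
    (S : Fin m → Ω → ℝ) (hSmeas : ∀ i, Measurable (S i))
    (hSindep : iIndepFun S P)
    (hSlaw : ∀ i, Measure.map (S i) P = μbar)
    (j : Fin k) (T : Ω → ℝ) (hTmeas : Measurable T)
    (hTlaw : Measure.map T P = μ j)
    (hTindep : IndepFun T (fun ω => fun i => S i ω) P) :
    (1 - α) - tvDist (μ j) μbar ≤
      (P {ω | T ω ≤ orderStat (fun i => S i ω) r}).toReal := by
  have : Nonempty (Fin k) := ⟨j⟩
  have : IsProbabilityMeasure μbar := by
    simpa [hμbar] using isProbabilityMeasure_inv_card_smul_sum μ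
  set π := Measure.pi fun _ : Fin m => μbar
  set E := {p : (Fin m → ℝ) × ℝ | countLT p.1 p.2 ≤ r - 1}
  have hE : MeasurableSet E :=
    measurableSet_countLT_le (fun i => (measurable_pi_apply i).comp measurable_fst) measurable_snd _
  have hlaw : P.map (fun ω => ((fun i => S i ω), T ω)) = π.prod (μ j) := by
    rw [(indepFun_iff_map_prod_eq_prod_map_map (by fun_prop) hTmeas.aemeasurable).1 hTindep.symm,
      hSindep.map_fun_eq_pi_map fun i => (hSmeas i).aemeasurable, hTlaw]
    simp_rw [hSlaw, π]
  have hcov : P {ω | T ω ≤ orderStat (fun i => S i ω) r} = π.prod (μ j) E := by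
    rw [← hlaw, Measure.map_apply (by fun_prop) hE]
    congr 1 with ω
    exact le_orderStat_iff _ (by omega) _
  have hmix : 1 - α ≤ (π.prod μbar E).toReal :=
    calc 1 - α ≤ (r : ℝ) / (m + 1) := by
          rw [le_div_iff₀ (by positivity), mul_comm, hrdef]
          exact Nat.le_ceil _
      _ = ((r : ENNReal) / (m + 1)).toReal := by simp [ENNReal.toReal_div, ENNReal.toReal_add]
      _ ≤ _ := ENNReal.toReal_mono (measure_ne_top _ _)
          (div_le_measure_prod_countLT_le μbar (by omega))
  have htv : (π.prod μbar E).toReal ≤ (π.prod (μ j) E).toReal + tvDist (μ j) μbar := by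
    rw [← ENNReal.toReal_ofReal (tvDist_nonneg (μ j) μbar),
      ← ENNReal.toReal_add (measure_ne_top _ _) ENNReal.ofReal_ne_top]
    exact ENNReal.toReal_mono (by finiteness) (π.prod_apply_le_prod_apply_add hE fun _ =>
      measure_le_add_tvDist (μ j) μbar (measurable_prodMk_left hE))
  rw [hcov]
  linarith

/-- **Pooled thresholds guarantee only mixture validity (Proposition 3).**
If `q̂` is the `r`-th order statistic (`r = ⌈(m+1)(1-α)⌉ ≤ m`) of `m` i.i.d. calibration
scores with law the uniform mixture `μ̄` of per-task score distributions `μ 0, …, μ (k-1)`,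
and `T` is an independent test score with law `μ j`, then
`P(T ≤ q̂) ≥ (1 - α) - TV(μ j, μ̄)`. -/
theorem pooled_threshold_pertask_coverage
    {Ω : Type*} [MeasurableSpace Ω] (P : Measure Ω) [IsProbabilityMeasure P]
    (k : ℕ) (hk : 1 ≤ k) (μ : Fin k → Measure ℝ) [∀ j, IsProbabilityMeasure (μ j)]
    (μbar : Measure ℝ) (hμbar : μbar = (k : ENNReal)⁻¹ • ∑ j : Fin k, μ j)
    (α : ℝ) (hα : α ∈ Set.Ioo (0 : ℝ) 1) (m : ℕ) (hm : 1 ≤ m)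
    (r : ℕ) (hrdef : r = ⌈((m : ℝ) + 1) * (1 - α)⌉₊) (hr : r ≤ m)
    (S : Fin m → Ω → ℝ) (hSmeas : ∀ i, Measurable (S i))
    (hSindep : iIndepFun S P)
    (hSlaw : ∀ i, Measure.map (S i) P = μbar)
    (j : Fin k) (T : Ω → ℝ) (hTmeas : Measurable T)
    (hTlaw : Measure.map T P = μ j)
    (hTindep : IndepFun T (fun ω => fun i => S i ω) P) :
    (1 - α) - tvDist (μ j) μbar ≤
      (P {ω | T ω ≤ orderStat (fun i => S i ω) r}).toReal :=
  pooled_threshold_pertask_coverage_general P k μ μbar hμbar α m hm r hrdef hr S hSmeas hSindep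
    hSlaw j T hTmeas hTlaw hTindep
end
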